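/- Let B̃ be the block diagonal matrix with diagonal blocks (1/h^d) M ⊗ K and K, where M and K are symmetric positive definite matrices satisfying λ_max(M) ≤ h^d, λ_min(M) ≥ (h/3)^d, and K has positive eigenvalues. Then λ_max(B̃) ≤ λ_max(K) and λ_min(B̃) ≥ λ_min(K)/3^d, so κ(B̃) ≤ 3^d κ(K). -/

import Mathlib

/-!
Eigenvalue bounds for a Hermitian matrix are the same thing as Loewner-order bounds by
scalar matrices. In that order `(h/3)^d • 1 ≤ M ≤ h^d • 1` and
`λ_min(K) • 1 ≤ K ≤ λ_max(K) • 1`, and the Kronecker product is monotone in each nonnegative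
factor, so `h^{-d} (M ⊗ K)` lies between `λ_min(K)/3^d` and `λ_max(K)`; the block `K` lies
between the same scalars, hence so does `B̃`.
-/

open Matrix Kronecker
open scoped MatrixOrder ComplexOrder

namespace Matrix

theorem sub_kronecker {α l m n p : Type*} [NonUnitalNonAssocRing α] (A₁ A₂ : Matrix l m α)
    (B : Matrix n p α) : (A₁ - A₂) ⊗ₖ B = A₁ ⊗ₖ B - A₂ ⊗ₖ B := by
  ext; simp [sub_mul]

theorem kronecker_sub {α l m n p : Type*} [NonUnitalNonAssocRing α] (A : Matrix l m α)
    (B₁ B₂ : Matrix n p α) : A ⊗ₖ (B₁ - B₂) = A ⊗ₖ B₁ - A ⊗ₖ B₂ := by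
  ext; simp [mul_sub]

theorem smul_one_kronecker_smul_one {R α m n : Type*} [CommSemiring R] [Semiring α]
    [Algebra R α] [DecidableEq m] [DecidableEq n] (a b : R) :
    (a • 1 : Matrix m m α) ⊗ₖ (b • 1 : Matrix n n α) = (a * b) • 1 := by
  rw [smul_kronecker, kronecker_smul, one_kronecker_one, smul_smul]

variable {𝕜 m n : Type*} [RCLike 𝕜]

theorem kronecker_le_kronecker [Finite m] [Finite n] {A B : Matrix m m 𝕜} {C D : Matrix n n 𝕜}
    (hAB : A ≤ B) (hCD : C ≤ D) (hB : 0 ≤ B) (hC : 0 ≤ C) : A ⊗ₖ C ≤ B ⊗ₖ D := by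
  have hleft : A ⊗ₖ C ≤ B ⊗ₖ C := by
    rw [le_iff, ← sub_kronecker]
    exact (le_iff.mp hAB).kronecker hC.posSemidef
  have hright : B ⊗ₖ C ≤ B ⊗ₖ D := by
    rw [le_iff, ← kronecker_sub]
    exact hB.posSemidef.kronecker (le_iff.mp hCD)
  exact hleft.trans hright

theorem PosSemidef.fromBlocks_zero [Fintype m] [Fintype n] {A : Matrix m m 𝕜}
    {D : Matrix n n 𝕜} (hA : A.PosSemidef) (hD : D.PosSemidef) :
    (fromBlocks A 0 0 D).PosSemidef := by
  classical
  obtain ⟨X, rfl⟩ := CStarAlgebra.nonneg_iff_eq_star_mul_self.mp hA.nonneg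
  obtain ⟨Y, rfl⟩ := CStarAlgebra.nonneg_iff_eq_star_mul_self.mp hD.nonneg
  simpa [fromBlocks_multiply, fromBlocks_conjTranspose, star_eq_conjTranspose] using
    posSemidef_conjTranspose_mul_self (fromBlocks X 0 0 Y)

theorem fromBlocks_le_fromBlocks [Fintype m] [Fintype n] {A₁ A₂ : Matrix m m 𝕜}
    {D₁ D₂ : Matrix n n 𝕜} (hA : A₁ ≤ A₂) (hD : D₁ ≤ D₂) :
    fromBlocks A₁ 0 0 D₁ ≤ fromBlocks A₂ 0 0 D₂ := by
  have hsub : fromBlocks A₂ 0 0 D₂ - fromBlocks A₁ 0 0 D₁ =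
      fromBlocks (A₂ - A₁) 0 0 (D₂ - D₁) := by
    simp [sub_eq_add_neg, fromBlocks_neg, fromBlocks_add]
  rw [le_iff, hsub]
  exact (le_iff.mp hA).fromBlocks_zero (le_iff.mp hD)

theorem fromBlocks_smul_one [DecidableEq m] [DecidableEq n] (r : ℝ) :
    fromBlocks (r • 1 : Matrix m m 𝕜) 0 0 (r • 1 : Matrix n n 𝕜) = r • 1 := by
  rw [← fromBlocks_one, fromBlocks_smul, smul_zero, smul_zero]

theorem IsHermitian.le_smul_one_iff [Fintype n] [DecidableEq n] {A : Matrix n n 𝕜}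
    (hA : A.IsHermitian) {r : ℝ} : A ≤ r • 1 ↔ ∀ i, hA.eigenvalues i ≤ r := by
  rw [← Algebra.algebraMap_eq_smul_one, le_algebraMap_iff_spectrum_le hA.isSelfAdjoint,
    hA.spectrum_real_eq_range_eigenvalues, Set.forall_mem_range]

theorem IsHermitian.smul_one_le_iff [Fintype n] [DecidableEq n] {A : Matrix n n 𝕜}
    (hA : A.IsHermitian) {r : ℝ} : r • 1 ≤ A ↔ ∀ i, r ≤ hA.eigenvalues i := by
  rw [← Algebra.algebraMap_eq_smul_one, algebraMap_le_iff_le_spectrum hA.isSelfAdjoint,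
    hA.spectrum_real_eq_range_eigenvalues, Set.forall_mem_range]

variable [Fintype m] [Fintype n] [DecidableEq m] [DecidableEq n]

theorem fromBlocks_smul_kronecker_le {M : Matrix m m 𝕜} {K : Matrix n n 𝕜} {c b : ℝ}
    (hc : 0 < c) (hM : M ≤ c • 1) (hK₀ : 0 ≤ K) (hK : K ≤ b • 1) :
    fromBlocks ((1 / c) • (M ⊗ₖ K)) 0 0 K ≤ b • 1 := by
  have hMK : M ⊗ₖ K ≤ (c * b) • 1 :=
    smul_one_kronecker_smul_one (α := 𝕜) (m := m) (n := n) c b ▸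
      kronecker_le_kronecker hM hK (PosSemidef.one.smul hc.le).nonneg hK₀
  have hblock : (1 / c) • (M ⊗ₖ K) ≤ b • 1 :=
    calc (1 / c) • (M ⊗ₖ K) ≤ (1 / c) • ((c * b) • 1) :=
          smul_le_smul_of_nonneg_left hMK (by positivity)
      _ = b • 1 := by rw [smul_smul]; congr 1; field_simp
  rw [← fromBlocks_smul_one]
  exact fromBlocks_le_fromBlocks hblock hK

theorem smul_one_le_fromBlocks_smul_kronecker {M : Matrix m m 𝕜} {K : Matrix n n 𝕜} {c s a : ℝ}
    (hc : 0 < c) (hs : 1 ≤ s) (ha : 0 ≤ a) (hM : (c / s) • 1 ≤ M) (hK : a • 1 ≤ K) :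
    (a / s) • 1 ≤ fromBlocks ((1 / c) • (M ⊗ₖ K)) 0 0 K := by
  have hcs : 0 ≤ c / s := by positivity
  have hMK : (c / s * a) • 1 ≤ M ⊗ₖ K :=
    smul_one_kronecker_smul_one (α := 𝕜) (m := m) (n := n) (c / s) a ▸
      kronecker_le_kronecker hM hK ((PosSemidef.one.smul hcs).nonneg.trans hM)
        (PosSemidef.one.smul ha).nonneg
  have hblock : (a / s) • 1 ≤ (1 / c) • (M ⊗ₖ K) :=
    calc (a / s) • (1 : Matrix (m × n) (m × n) 𝕜) = (1 / c) • ((c / s * a) • 1) := by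
          rw [smul_smul]; congr 1; field_simp
      _ ≤ (1 / c) • (M ⊗ₖ K) := smul_le_smul_of_nonneg_left hMK (by positivity)
  have hK' : (a / s) • 1 ≤ K :=
    (smul_le_smul_of_nonneg_right (div_le_self ha hs) PosSemidef.one.nonneg).trans hK
  rw [← fromBlocks_smul_one]
  exact fromBlocks_le_fromBlocks hblock hK'

end Matrix

theorem stmt8_general {p q d : ℕ} (hq : 0 < q)
    (h : ℝ) (hh : 0 < h)
    (M : Matrix (Fin p) (Fin p) ℝ) (K : Matrix (Fin q) (Fin q) ℝ)
    (hM : M.PosDef) (hK : K.PosDef)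
    (hMmax : ∀ i, hM.1.eigenvalues i ≤ h ^ d)
    (hMmin : ∀ i, (h / 3) ^ d ≤ hM.1.eigenvalues i)
    (Btil : Matrix ((Fin p × Fin q) ⊕ Fin q) ((Fin p × Fin q) ⊕ Fin q) ℝ)
    (hBdef : Btil = Matrix.fromBlocks ((1 / h ^ d) • (M ⊗ₖ K)) 0 0 K)
    (hB : Btil.IsHermitian) :
    (⨆ i, hB.eigenvalues i) ≤ (⨆ i, hK.1.eigenvalues i) ∧
    (⨅ i, hK.1.eigenvalues i) / 3 ^ d ≤ (⨅ i, hB.eigenvalues i) ∧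
    (⨆ i, hB.eigenvalues i) / (⨅ i, hB.eigenvalues i) ≤
      3 ^ d * ((⨆ i, hK.1.eigenvalues i) / (⨅ i, hK.1.eigenvalues i)) := by
  have : NeZero q := ⟨hq.ne'⟩
  obtain ⟨iₘ, hiₘ⟩ := exists_eq_ciInf_of_finite (f := hK.1.eigenvalues)
  set a := ⨅ i, hK.1.eigenvalues i
  set b := ⨆ i, hK.1.eigenvalues i
  have ha : 0 < a := hiₘ ▸ hK.eigenvalues_pos iₘ
  have hKa : a • 1 ≤ K :=
    hK.1.smul_one_le_iff.mpr fun i ↦ ciInf_le (Finite.bddBelow_range _) i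
  have hKb : K ≤ b • 1 :=
    hK.1.le_smul_one_iff.mpr fun i ↦ le_ciSup (Finite.bddAbove_range _) i
  have hMupper : M ≤ (h ^ d) • 1 := hM.1.le_smul_one_iff.mpr hMmax
  have hMlower : (h ^ d / 3 ^ d) • 1 ≤ M :=
    hM.1.smul_one_le_iff.mpr (by simpa only [div_pow] using hMmin)
  subst hBdef
  have hsup : (⨆ i, hB.eigenvalues i) ≤ b := ciSup_le <| hB.le_smul_one_iff.mp <|
    fromBlocks_smul_kronecker_le (by positivity) hMupper hK.posSemidef.nonneg hKb
  have hinf : a / 3 ^ d ≤ ⨅ i, hB.eigenvalues i := le_ciInf <| hB.smul_one_le_iff.mp <|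
    smul_one_le_fromBlocks_smul_kronecker (by positivity) (one_le_pow₀ (by norm_num)) ha.le
      hMlower hKa
  refine ⟨hsup, hinf, ?_⟩
  calc (⨆ i, hB.eigenvalues i) / (⨅ i, hB.eigenvalues i)
      ≤ b / (a / 3 ^ d) := by
        have hab : a ≤ b := ciInf_le_ciSup (Finite.bddBelow_range _) (Finite.bddAbove_range _)
        exact div_le_div₀ (ha.le.trans hab) hsup (by positivity) hinf
    _ = 3 ^ d * (b / a) := by field_simp

theorem stmt8 {p q d : ℕ} (hp : 0 < p) (hq : 0 < q) (hd : 1 ≤ d)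
    (h : ℝ) (hh : 0 < h)
    (M : Matrix (Fin p) (Fin p) ℝ) (K : Matrix (Fin q) (Fin q) ℝ)
    (hM : M.PosDef) (hK : K.PosDef)
    (hMmax : ∀ i, hM.1.eigenvalues i ≤ h ^ d)
    (hMmin : ∀ i, (h / 3) ^ d ≤ hM.1.eigenvalues i)
    (Btil : Matrix ((Fin p × Fin q) ⊕ Fin q) ((Fin p × Fin q) ⊕ Fin q) ℝ)
    (hBdef : Btil = Matrix.fromBlocks ((1 / h ^ d) • (M ⊗ₖ K)) 0 0 K)
    (hB : Btil.IsHermitian) :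
    (⨆ i, hB.eigenvalues i) ≤ (⨆ i, hK.1.eigenvalues i) ∧
    (⨅ i, hK.1.eigenvalues i) / 3 ^ d ≤ (⨅ i, hB.eigenvalues i) ∧
    (⨆ i, hB.eigenvalues i) / (⨅ i, hB.eigenvalues i) ≤
      3 ^ d * ((⨆ i, hK.1.eigenvalues i) / (⨅ i, hK.1.eigenvalues i)) :=
  stmt8_general hq h hh M K hM hK hMmax hMmin Btil hBdef hB
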